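/- arXiv:1812.04890 — 3 statements merged into one kernel-verified Lean document; each statement's English description precedes it below -/
import Mathlib

section
/- Let A be a linear operator on a normed space with ‖A^n‖ ≤ 1 for all n ∈ ℕ, and consider the 3×3 block operator matrix B₂ = [[0,I,0],[0,0,I],[0,0,A]]. Then for all n ≥ 2, B₂^n = [[0,0,A^{n-2}],[0,0,A^{n-1}],[0,0,A^n]], and consequently ‖B₂^n‖ ≤ √3 for all n ≥ 2 (in the ℓ²-product norm). -/
/-!
Each application of `B₂` shifts the coordinates of `(x, y, z)` up by one and applies `A` to the
last one, so after two steps every coordinate of `B₂ⁿ v` is a power of `A` applied to `v 2`.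
Power-boundedness of `A` makes each coordinate at most `‖v 2‖ ≤ ‖v‖`, and three such coordinates
have `ℓ²` norm at most `√3 ‖v‖`.
-/

theorem PiLp.norm_le_sqrt_card_mul {ι : Type*} [Fintype ι] {β : ι → Type*}
    [∀ i, SeminormedAddCommGroup (β i)] (x : PiLp 2 β) {c : ℝ} (hc : 0 ≤ c)
    (h : ∀ i, ‖x i‖ ≤ c) : ‖x‖ ≤ √(Fintype.card ι) * c := by
  have hsq : ‖x‖ ^ 2 ≤ (√(Fintype.card ι) * c) ^ 2 := calc
    ‖x‖ ^ 2 = ∑ i, ‖x i‖ ^ 2 := PiLp.norm_sq_eq_of_L2 β x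
    _ ≤ ∑ _ : ι, c ^ 2 := by gcongr with i; exact h i
    _ = (√(Fintype.card ι) * c) ^ 2 := by simp [mul_pow]
  exact (pow_le_pow_iff_left₀ (norm_nonneg x) (by positivity) two_ne_zero).mp hsq

theorem ContinuousLinearMap.norm_pow_apply_le_of_forall_norm_pow_le_one
    {𝕜 E : Type*} [NontriviallyNormedField 𝕜] [SeminormedAddCommGroup E] [NormedSpace 𝕜 E]
    {A : E →L[𝕜] E} (hA : ∀ k : ℕ, ‖A ^ k‖ ≤ 1) (k : ℕ) (x : E) : ‖(A ^ k) x‖ ≤ ‖x‖ := by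
  simpa using (A ^ k).le_of_opNorm_le (hA k) x

section BlockShift

variable {𝕜 X : Type*} [NontriviallyNormedField 𝕜] [NormedAddCommGroup X] [NormedSpace 𝕜 X]
  {A : X →L[𝕜] X} {B : PiLp 2 (fun _ : Fin 3 => X) →L[𝕜] PiLp 2 (fun _ : Fin 3 => X)}

/-- `B` is the block operator `[[0,I,0],[0,0,I],[0,0,A]]` on `X³`. -/
def IsBlockShift (A : X →L[𝕜] X)
    (B : PiLp 2 (fun _ : Fin 3 => X) →L[𝕜] PiLp 2 (fun _ : Fin 3 => X)) : Prop :=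
  ∀ v, WithLp.equiv 2 (∀ _ : Fin 3, X) (B v) = ![v 1, v 2, A (v 2)]

theorem IsBlockShift.apply (hB : IsBlockShift A B) (v : PiLp 2 (fun _ : Fin 3 => X)) :
    B v 0 = v 1 ∧ B v 1 = v 2 ∧ B v 2 = A (v 2) :=
  ⟨congrFun (hB v) 0, congrFun (hB v) 1, congrFun (hB v) 2⟩

theorem IsBlockShift.pow_apply_two (hB : IsBlockShift A B) (v : PiLp 2 (fun _ : Fin 3 => X))
    (k : ℕ) : (B ^ k) v 2 = (A ^ k) (v 2) := by
  induction k with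
  | zero => rfl
  | succ k ih =>
    rw [pow_succ', mul_apply_eq_comp, (hB.apply _).2.2, ih, pow_succ', mul_apply_eq_comp]

theorem IsBlockShift.pow_succ_apply_one (hB : IsBlockShift A B)
    (v : PiLp 2 (fun _ : Fin 3 => X)) (k : ℕ) : (B ^ (k + 1)) v 1 = (A ^ k) (v 2) := by
  rw [pow_succ', mul_apply_eq_comp, (hB.apply _).2.1, hB.pow_apply_two]

theorem IsBlockShift.pow_add_two_apply_zero (hB : IsBlockShift A B)
    (v : PiLp 2 (fun _ : Fin 3 => X)) (k : ℕ) : (B ^ (k + 2)) v 0 = (A ^ k) (v 2) := by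
  rw [pow_succ', mul_apply_eq_comp, (hB.apply _).1, hB.pow_succ_apply_one]

theorem IsBlockShift.pow_add_two_apply (hB : IsBlockShift A B)
    (v : PiLp 2 (fun _ : Fin 3 => X)) (k : ℕ) :
    WithLp.equiv 2 (∀ _ : Fin 3, X) ((B ^ (k + 2)) v)
      = ![(A ^ k) (v 2), (A ^ (k + 1)) (v 2), (A ^ (k + 2)) (v 2)] := by
  funext i
  fin_cases i
  · exact hB.pow_add_two_apply_zero v k
  · exact hB.pow_succ_apply_one v (k + 1)
  · exact hB.pow_apply_two v (k + 2)

theorem IsBlockShift.norm_pow_add_two_le (hB : IsBlockShift A B) (hA : ∀ k : ℕ, ‖A ^ k‖ ≤ 1)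
    (k : ℕ) : ‖B ^ (k + 2)‖ ≤ √3 := by
  refine ContinuousLinearMap.opNorm_le_bound _ (Real.sqrt_nonneg 3) fun v => ?_
  have hcoord : ∀ i, ‖(B ^ (k + 2)) v i‖ ≤ ‖v‖ := by
    intro i
    have hv : ‖v 2‖ ≤ ‖v‖ := PiLp.norm_apply_le v 2
    have hA' := ContinuousLinearMap.norm_pow_apply_le_of_forall_norm_pow_le_one hA
    fin_cases i
    · exact hB.pow_add_two_apply_zero v k ▸ (hA' k _).trans hv
    · exact hB.pow_succ_apply_one v (k + 1) ▸ (hA' (k + 1) _).trans hv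
    · exact hB.pow_apply_two v (k + 2) ▸ (hA' (k + 2) _).trans hv
  simpa using PiLp.norm_le_sqrt_card_mul _ (norm_nonneg v) hcoord

end BlockShift

/-- For `A` with `‖Aᵏ‖ ≤ 1` for all `k`, the block operator
`B₂ = [[0,I,0],[0,0,I],[0,0,A]]` on `X³` (with the `ℓ²` product norm) satisfies, for
`n ≥ 2`, `B₂ⁿ = [[0,0,A^{n-2}],[0,0,A^{n-1}],[0,0,Aⁿ]]` and `‖B₂ⁿ‖ ≤ √3`. -/
theorem block_B2_powers_bounded
    (X : Type*) [NormedAddCommGroup X] [NormedSpace ℂ X]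
    (A : X →L[ℂ] X) (hA : ∀ k : ℕ, ‖A ^ k‖ ≤ 1)
    (B₂ : PiLp 2 (fun _ : Fin 3 => X) →L[ℂ] PiLp 2 (fun _ : Fin 3 => X))
    (hB₂ : ∀ v : PiLp 2 (fun _ : Fin 3 => X),
      WithLp.equiv 2 (∀ _ : Fin 3, X) (B₂ v)
        = ![WithLp.equiv 2 (∀ _ : Fin 3, X) v 1,
            WithLp.equiv 2 (∀ _ : Fin 3, X) v 2,
            A (WithLp.equiv 2 (∀ _ : Fin 3, X) v 2)]) :
    ∀ n : ℕ, 2 ≤ n →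
      (∀ v : PiLp 2 (fun _ : Fin 3 => X),
        WithLp.equiv 2 (∀ _ : Fin 3, X) ((B₂ ^ n) v)
          = ![(A ^ (n - 2)) (WithLp.equiv 2 (∀ _ : Fin 3, X) v 2),
              (A ^ (n - 1)) (WithLp.equiv 2 (∀ _ : Fin 3, X) v 2),
              (A ^ n) (WithLp.equiv 2 (∀ _ : Fin 3, X) v 2)])
      ∧ ‖B₂ ^ n‖ ≤ Real.sqrt 3 := by
  intro n hn
  obtain ⟨k, rfl⟩ := Nat.exists_eq_add_of_le' hn
  exact ⟨fun v => IsBlockShift.pow_add_two_apply hB₂ v k,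
    IsBlockShift.norm_pow_add_two_le hB₂ hA k⟩
end

section
/- Suppose a complex-valued e ∈ H^{s+2}(ℝ^d) satisfies e = (i δt/4)Δe − (i δt β/2) Υ e − r for real-valued Υ ∈ L^∞ and r ∈ L²(ℝ^d). Then ‖e‖_{L²} ≤ ‖r‖_{L²}. -/
/-!
Multiply the identity by `conj e` and take real parts pointwise: the potential term
`i (δt β / 2) Υ |e|²` is purely imaginary and drops out. Integrating, the Laplacian term also
drops out, since integration by parts gives `∫ conj e · Δe = -∫ |∇e|²`, which is real. What
remains is `‖e‖² = -Re ⟪e, r⟫ ≤ ‖e‖ ‖r‖` in `L²`.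
-/

open MeasureTheory

/-- The Laplacian of a function on `ℝ^d`. -/
noncomputable def lap (d : ℕ) (u : (Fin d → ℝ) → ℂ) (x : Fin d → ℝ) : ℂ :=
  ∑ j : Fin d, fderiv ℝ (fun y => fderiv ℝ u y (Pi.single j 1)) x (Pi.single j 1)

open scoped ComplexConjugate

lemma norm_le_of_sq_le_norm_inner {𝕜 E : Type*} [RCLike 𝕜] [NormedAddCommGroup E]
    [InnerProductSpace 𝕜 E] {x y : E} (h : ‖x‖ ^ 2 ≤ ‖inner 𝕜 x y‖) : ‖x‖ ≤ ‖y‖ := by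
  nlinarith [norm_inner_le_norm (𝕜 := 𝕜) x y, norm_nonneg x, norm_nonneg y]

lemma Complex.norm_sq_eq_of_eq_I_mul_sub {z w ρ : ℂ} {a b : ℝ}
    (h : z = I * a * w - I * b * z - ρ) :
    ‖z‖ ^ 2 = -(a * (conj z * w).im) - (conj z * ρ).re := by
  calc ‖z‖ ^ 2 = (conj z * z).re := by rw [conj_mul']; norm_cast
    _ = (conj z * (I * a * w - I * b * z - ρ)).re := by rw [← h]
    _ = -(a * (conj z * w).im) - (conj z * ρ).re := by
      simp only [mul_sub, sub_re, mul_re, mul_im, I_re, I_im, ofReal_re, ofReal_im, conj_re,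
        conj_im]
      ring

section L2

variable {α : Type*} [MeasurableSpace α] {μ : Measure α}

lemma MeasureTheory.MemLp.integrable_conj_mul {f g : α → ℂ} (hf : MemLp f 2 μ)
    (hg : MemLp g 2 μ) : Integrable (fun x => conj (f x) * g x) μ :=
  hf.star.integrable_mul (p := 2) (q := 2) hg

variable {𝕜 E : Type*} [RCLike 𝕜] [NormedAddCommGroup E] [InnerProductSpace 𝕜 E]
  {f g : α → E}

lemma MeasureTheory.MemLp.inner_toLp (hf : MemLp f 2 μ) (hg : MemLp g 2 μ) :
    inner 𝕜 (hf.toLp f) (hg.toLp g) = ∫ x, inner 𝕜 (f x) (g x) ∂μ := by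
  rw [L2.inner_def]
  refine integral_congr_ae ?_
  filter_upwards [hf.coeFn_toLp, hg.coeFn_toLp] with x hfx hgx
  rw [hfx, hgx]

lemma eLpNorm_le_of_integral_norm_sq_le_norm_integral_inner (hf : MemLp f 2 μ)
    (hg : MemLp g 2 μ) (h : ∫ x, ‖f x‖ ^ 2 ∂μ ≤ ‖∫ x, inner 𝕜 (f x) (g x) ∂μ‖) :
    eLpNorm f 2 μ ≤ eLpNorm g 2 μ := by
  have hnorm : ‖hf.toLp f‖ ^ 2 = ∫ x, ‖f x‖ ^ 2 ∂μ := by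
    have hinner := hf.inner_toLp (𝕜 := 𝕜) hf
    simp_rw [inner_self_eq_norm_sq_to_K, ← RCLike.ofReal_pow, integral_ofReal] at hinner
    exact_mod_cast hinner
  rw [← hnorm, ← hf.inner_toLp hg] at h
  have key := norm_le_of_sq_le_norm_inner h
  rwa [Lp.norm_toLp, Lp.norm_toLp,
    ENNReal.toReal_le_toReal hf.eLpNorm_ne_top hg.eLpNorm_ne_top] at key

end L2

section IntegrationByParts

variable {E : Type*} [NormedAddCommGroup E] [NormedSpace ℝ E]

lemma fderiv_conj_apply (u : E → ℂ) (x v : E) :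
    fderiv ℝ (fun y => conj (u y)) x v = conj (fderiv ℝ u x v) := by
  simpa using congrArg (· v) (fderiv_star (𝕜 := ℝ) (f := u) (x := x))

lemma fderiv_fderiv_apply_eq_iteratedFDeriv {u : E → ℂ} (hu : ContDiff ℝ 2 u) (x v : E) :
    fderiv ℝ (fun y => fderiv ℝ u y v) x v = iteratedFDeriv ℝ 2 u x ![v, v] := by
  have hdiff : DifferentiableAt ℝ (fderiv ℝ u) x :=
    (hu.fderiv_right (m := 1) (by norm_num)).differentiable one_ne_zero x
  rw [iteratedFDeriv_two_apply, fderiv_clm_apply hdiff (differentiableAt_const _)]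
  simp

variable [MeasurableSpace E] {μ : Measure E}

lemma memLp_fderiv_fderiv_apply [OpensMeasurableSpace E] {u : E → ℂ} (hu : ContDiff ℝ 2 u)
    (v : E) (hu2 : MemLp (fun x => iteratedFDeriv ℝ 2 u x) 2 μ) :
    MemLp (fun x => fderiv ℝ (fun y => fderiv ℝ u y v) x v) 2 μ := by
  simp_rw [fderiv_fderiv_apply_eq_iteratedFDeriv hu]
  refine hu2.of_le_mul (c := ‖v‖ ^ 2) ?_ (ae_of_all _ fun x => ?_)
  · exact ((continuous_eval_const ![v, v]).comp
      (hu.continuous_iteratedFDeriv le_rfl)).aestronglyMeasurable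
  · calc ‖iteratedFDeriv ℝ 2 u x ![v, v]‖
        ≤ ‖iteratedFDeriv ℝ 2 u x‖ * ∏ i : Fin 2, ‖(![v, v] : Fin 2 → E) i‖ :=
          (iteratedFDeriv ℝ 2 u x).le_opNorm _
      _ = ‖v‖ ^ 2 * ‖iteratedFDeriv ℝ 2 u x‖ := by
          simp only [Fin.prod_univ_two, Matrix.cons_val_zero, Matrix.cons_val_one]
          ring

lemma integral_conj_mul_fderiv_fderiv [FiniteDimensional ℝ E] [BorelSpace E]
    [μ.IsAddHaarMeasure] {u : E → ℂ} (v : E) (hu : ContDiff ℝ 2 u)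
    (hu0 : MemLp u 2 μ) (hu1 : MemLp (fun x => fderiv ℝ u x v) 2 μ)
    (hu2 : MemLp (fun x => fderiv ℝ (fun y => fderiv ℝ u y v) x v) 2 μ) :
    ∫ x, conj (u x) * fderiv ℝ (fun y => fderiv ℝ u y v) x v ∂μ
      = -((∫ x, ‖fderiv ℝ u x v‖ ^ 2 ∂μ : ℝ) : ℂ) := by
  have hdu : Differentiable ℝ (fun y => fderiv ℝ u y v) :=
    ((hu.fderiv_right (m := 1) (by norm_num)).clm_apply contDiff_const).differentiable
      one_ne_zero
  have hconj : Differentiable ℝ (fun y => conj (u y)) :=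
    (Complex.conjCLE.toContinuousLinearMap.contDiff.comp hu).differentiable two_ne_zero
  have hu1' : Integrable (fun x => fderiv ℝ (fun y => conj (u y)) x v * fderiv ℝ u x v) μ := by
    simpa only [fderiv_conj_apply] using hu1.integrable_conj_mul hu1
  rw [integral_mul_fderiv_eq_neg_fderiv_mul_of_integrable hu1' (hu0.integrable_conj_mul hu2)
    (hu0.integrable_conj_mul hu1) (fun x _ => hconj x) (fun x _ => hdu x)]
  simp_rw [fderiv_conj_apply, Complex.conj_mul', ← integral_complex_ofReal]
  push_cast
  rfl

end IntegrationByParts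

section Laplacian

variable {d : ℕ} {u : (Fin d → ℝ) → ℂ}

lemma memLp_lap (hu : ContDiff ℝ 2 u)
    (hu2 : MemLp (fun x => iteratedFDeriv ℝ 2 u x) 2 volume) : MemLp (lap d u) 2 volume := by
  unfold lap
  exact memLp_finsetSum _ fun j _ => memLp_fderiv_fderiv_apply hu _ hu2

lemma integral_conj_mul_lap (hu : ContDiff ℝ 2 u) (hu0 : MemLp u 2 volume)
    (hu1 : MemLp (fun x => fderiv ℝ u x) 2 volume)
    (hu2 : MemLp (fun x => iteratedFDeriv ℝ 2 u x) 2 volume) :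
    ∫ x, conj (u x) * lap d u x
      = -((∑ j : Fin d, ∫ x, ‖fderiv ℝ u x (Pi.single j 1)‖ ^ 2 : ℝ) : ℂ) := by
  have hpartial (j : Fin d) : MemLp (fun x => fderiv ℝ u x (Pi.single j 1)) 2 volume :=
    (ContinuousLinearMap.apply ℝ ℂ (Pi.single j 1 : Fin d → ℝ)).comp_memLp' hu1
  simp_rw [lap, Finset.mul_sum]
  rw [integral_finsetSum _ fun j _ =>
    hu0.integrable_conj_mul (memLp_fderiv_fderiv_apply hu _ hu2)]
  simp_rw [integral_conj_mul_fderiv_fderiv _ hu hu0 (hpartial _)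
    (memLp_fderiv_fderiv_apply hu _ hu2)]
  push_cast
  rw [Finset.sum_neg_distrib]

lemma integral_im_conj_mul_lap (hu : ContDiff ℝ 2 u) (hu0 : MemLp u 2 volume)
    (hu1 : MemLp (fun x => fderiv ℝ u x) 2 volume)
    (hu2 : MemLp (fun x => iteratedFDeriv ℝ 2 u x) 2 volume) :
    ∫ x, (conj (u x) * lap d u x).im = 0 := by
  rw [show ∫ x, (conj (u x) * lap d u x).im = (∫ x, conj (u x) * lap d u x).im from
    integral_im (hu0.integrable_conj_mul (memLp_lap hu hu2)), integral_conj_mul_lap hu hu0 hu1 hu2]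
  simp

end Laplacian

theorem L2_bound_from_resolvent_identity_general
    (d : ℕ) (δt β : ℝ)
    (e r : (Fin d → ℝ) → ℂ) (Υ : (Fin d → ℝ) → ℝ)
    (he_smooth : ContDiff ℝ 2 e)
    (he2 : MemLp e 2 volume)
    (he2' : MemLp (fun x => fderiv ℝ e x) 2 volume)
    (he2'' : MemLp (fun x => iteratedFDeriv ℝ 2 e x) 2 volume)
    (hr : MemLp r 2 volume)
    (heq : ∀ x, e x = (Complex.I * δt / 4) * lap d e x
        - (Complex.I * δt * β / 2) * (Υ x : ℂ) * e x - r x) :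
    eLpNorm e 2 volume ≤ eLpNorm r 2 volume := by
  have hpointwise (x : Fin d → ℝ) : ‖e x‖ ^ 2
      = -(δt / 4 * (conj (e x) * lap d e x).im) - (conj (e x) * r x).re :=
    Complex.norm_sq_eq_of_eq_I_mul_sub (b := δt * β / 2 * Υ x)
      ((heq x).trans (by push_cast; ring))
  have hlapInt := he2.integrable_conj_mul (memLp_lap he_smooth he2'')
  have hrInt := he2.integrable_conj_mul hr
  have hlapIm : Integrable (fun x => -(δt / 4 * (conj (e x) * lap d e x).im)) :=
    (hlapInt.im.const_mul _).neg
  have hrRe : Integrable (fun x => (conj (e x) * r x).re) := hrInt.re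
  have henergy : ∫ x, ‖e x‖ ^ 2 = -(∫ x, conj (e x) * r x).re := by
    simp_rw [hpointwise]
    rw [integral_sub hlapIm hrRe, integral_neg, integral_const_mul,
      integral_im_conj_mul_lap he_smooth he2 he2' he2'',
      show ∫ x, (conj (e x) * r x).re = (∫ x, conj (e x) * r x).re from integral_re hrInt]
    ring
  refine eLpNorm_le_of_integral_norm_sq_le_norm_integral_inner (𝕜 := ℂ) he2 hr ?_
  simp_rw [RCLike.inner_apply', henergy]
  exact (neg_le_abs _).trans (Complex.abs_re_le_norm _)

/-- If `e ∈ H^{s+2}(ℝ^d)` satisfies `e = (iδt/4)Δe − (iδtβ/2)Υe − r` with `Υ`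
real-valued bounded and `r ∈ L²`, then `‖e‖_{L²} ≤ ‖r‖_{L²}`. -/
theorem L2_bound_from_resolvent_identity
    (d : ℕ) (δt β : ℝ) (hδt : 0 < δt)
    (e r : (Fin d → ℝ) → ℂ) (Υ : (Fin d → ℝ) → ℝ)
    (he_smooth : ContDiff ℝ 2 e)
    (he2 : MemLp e 2 volume)
    (he2' : MemLp (fun x => fderiv ℝ e x) 2 volume)
    (he2'' : MemLp (fun x => iteratedFDeriv ℝ 2 e x) 2 volume)
    (hΥmeas : Measurable Υ) (hΥbdd : ∃ M, ∀ x, |Υ x| ≤ M)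
    (hr : MemLp r 2 volume)
    (heq : ∀ x, e x = (Complex.I * δt / 4) * lap d e x
        - (Complex.I * δt * β / 2) * (Υ x : ℂ) * e x - r x) :
    eLpNorm e 2 volume ≤ eLpNorm r 2 volume :=
  L2_bound_from_resolvent_identity_general d δt β e r Υ he_smooth he2 he2' he2'' hr heq
end

section
/- Energy preservation of the generalized relaxation method (simplified NLS case): suppose φ_n, φ_{n+1} ∈ H¹(ℝ^d) ∩ L^{2σ+2}, and γ_{n±1/2} ≥ 0 satisfy (γ_{n+1/2}^{σ+1} − γ_{n-1/2}^{σ+1}) = ((σ+1)/σ)|φ_n|²(γ_{n+1/2}^σ − γ_{n-1/2}^σ) pointwise, and i(φ_{n+1}−φ_n)/δt = (−Δ/2 + β γ_{n+1/2}^σ)(φ_{n+1}+φ_n)/2. Then E_rlx(φ_{n+1}, γ_{n+1/2}) = E_rlx(φ_n, γ_{n-1/2}), where E_rlx(φ,γ) = ∫ ( (1/4)|∇φ|² + (β/2)γ^σ|φ|² − β σ/(2(σ+1)) γ^{σ+1} ) dx. -/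
/-!
Pairing the scheme with `conj (φ_{n+1} - φ_n)` and taking real parts removes the time difference,
which contributes `i |φ_{n+1} - φ_n|² / δt`. After integration by parts the Laplacian gives half
the change of `∫ |∇φ|²` and the potential gives `β ∫ γ_{n+1/2}^σ (|φ_{n+1}|² - |φ_n|²)`. The
relaxation constraint, multiplied by `σ / (σ + 1)`, trades `∫ γ_{n+1/2}^σ |φ_n|²` for
`∫ γ_{n-1/2}^σ |φ_n|²` plus `σ / (σ + 1)` times the change of `∫ γ^{σ+1}`, and this is exactly what
the last term of `E_rlx` absorbs.
-/

open MeasureTheory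

/-- Squared norm of the gradient, `|∇u|²`. -/
noncomputable def gradsq (d : ℕ) (u : (Fin d → ℝ) → ℂ) (x : Fin d → ℝ) : ℝ :=
  ∑ j : Fin d, ‖fderiv ℝ u x (Pi.single j 1)‖ ^ 2

/-- Pairing `∇u ⋅ conj(∇v)`. -/
noncomputable def gradInner (d : ℕ) (u v : (Fin d → ℝ) → ℂ) (x : Fin d → ℝ) : ℂ :=
  ∑ j : Fin d, fderiv ℝ u x (Pi.single j 1) * (starRingEnd ℂ) (fderiv ℝ v x (Pi.single j 1))

open ComplexConjugate

lemma re_midpoint_mul_conj_sub (a b : ℂ) :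
    ((a + b) / 2 * conj (a - b)).re = (‖a‖ ^ 2 - ‖b‖ ^ 2) / 2 := by
  simp only [Complex.mul_re, Complex.div_re, Complex.conj_re, Complex.conj_im, Complex.sub_re,
    Complex.sub_im, Complex.add_re, Complex.add_im, Complex.sq_norm, Complex.normSq_apply]
  norm_num
  ring

/-- The time-difference term contributes `I ‖a - b‖² / t`, which is purely imaginary. -/
lemma re_mul_conj_sub_of_crankNicolson {a b L : ℂ} {t g : ℝ}
    (h : Complex.I * ((a - b) / t) = -(1 / 2 : ℂ) * L + g * ((a + b) / 2)) :
    (L * conj (a - b)).re = g * (‖a‖ ^ 2 - ‖b‖ ^ 2) := by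
  have hL : L * conj (a - b)
      = ((2 * g : ℝ) : ℂ) * ((a + b) / 2 * conj (a - b))
        - Complex.I * ((2 * Complex.normSq (a - b) / t : ℝ) : ℂ) := by
    push_cast
    rw [← Complex.mul_conj]
    linear_combination (2 * conj (a - b)) * h
  rw [hL, Complex.sub_re, Complex.re_ofReal_mul, Complex.I_mul_re, Complex.ofReal_im,
    re_midpoint_mul_conj_sub]
  ring

lemma pow_mul_eq_of_relaxation {σ : ℕ} {a b p : ℝ}
    (h : a ^ (σ + 1) - b ^ (σ + 1) = ((σ + 1 : ℝ) / σ) * p * (a ^ σ - b ^ σ)) :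
    a ^ σ * p = b ^ σ * p + σ / (σ + 1) * (a ^ (σ + 1) - b ^ (σ + 1)) := by
  rcases Nat.eq_zero_or_pos σ with rfl | hσ
  · simp
  · rw [h]
    field_simp
    ring

lemma re_gradInner_midpoint_sub {d : ℕ} {u v : (Fin d → ℝ) → ℂ} {x : Fin d → ℝ}
    (hu : DifferentiableAt ℝ u x) (hv : DifferentiableAt ℝ v x) :
    (gradInner d (fun y => (u y + v y) / 2) (fun y => u y - v y) x).re
      = (gradsq d u x - gradsq d v x) / 2 := by
  have hmid : fderiv ℝ (fun y => (u y + v y) / 2) x = (2 : ℂ)⁻¹ • (fderiv ℝ u x + fderiv ℝ v x) :=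
    (((hu.hasFDerivAt.add hv.hasFDerivAt).const_smul (2 : ℂ)⁻¹).congr_of_eventuallyEq
      (Filter.Eventually.of_forall fun y => by simp [div_eq_inv_mul])).fderiv
  simp only [gradInner, gradsq, Complex.re_sum, hmid, fderiv_fun_sub hu hv]
  rw [← Finset.sum_sub_distrib, Finset.sum_div]
  refine Finset.sum_congr rfl fun j _ => ?_
  rw [← re_midpoint_mul_conj_sub]
  simp [div_eq_inv_mul, mul_add]

section Integrals

variable {X : Type*} [MeasurableSpace X] {μ : Measure X}

lemma re_integral_mul_conj_sub_of_crankNicolson {a b L : X → ℂ} {w : X → ℝ} {t β : ℝ}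
    (h : ∀ x, Complex.I * ((a x - b x) / t)
      = -(1 / 2 : ℂ) * L x + (β : ℂ) * (w x : ℂ) * ((a x + b x) / 2))
    (hL : Integrable (fun x => L x * conj (a x - b x)) μ)
    (ha : Integrable (fun x => w x * ‖a x‖ ^ 2) μ) (hb : Integrable (fun x => w x * ‖b x‖ ^ 2) μ) :
    (∫ x, L x * conj (a x - b x) ∂μ).re
      = β * ((∫ x, w x * ‖a x‖ ^ 2 ∂μ) - ∫ x, w x * ‖b x‖ ^ 2 ∂μ) := by
  have hre : ∀ x, (L x * conj (a x - b x)).re = β * (w x * ‖a x‖ ^ 2) - β * (w x * ‖b x‖ ^ 2) := by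
    intro x
    rw [re_mul_conj_sub_of_crankNicolson (g := β * w x) (by push_cast; exact h x)]
    ring
  rw [← RCLike.re_to_complex, ← integral_re hL]
  simp only [RCLike.re_to_complex, hre]
  rw [integral_sub (ha.const_mul β) (hb.const_mul β), integral_const_mul, integral_const_mul,
    mul_sub]

lemma integrable_and_integral_pow_mul_of_relaxation {σ : ℕ} {a b p : X → ℝ}
    (h : ∀ x, a x ^ (σ + 1) - b x ^ (σ + 1) = ((σ + 1 : ℝ) / σ) * p x * (a x ^ σ - b x ^ σ))
    (hb : Integrable (fun x => b x ^ σ * p x) μ)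
    (ha₁ : Integrable (fun x => a x ^ (σ + 1)) μ) (hb₁ : Integrable (fun x => b x ^ (σ + 1)) μ) :
    Integrable (fun x => a x ^ σ * p x) μ ∧ ∫ x, a x ^ σ * p x ∂μ
      = (∫ x, b x ^ σ * p x ∂μ)
        + σ / (σ + 1) * ((∫ x, a x ^ (σ + 1) ∂μ) - ∫ x, b x ^ (σ + 1) ∂μ) := by
  have hdiff : Integrable (fun x => σ / (σ + 1) * (a x ^ (σ + 1) - b x ^ (σ + 1))) μ :=
    (ha₁.sub hb₁).const_mul _
  simp_rw [pow_mul_eq_of_relaxation (h _)]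
  exact ⟨hb.add hdiff, by rw [integral_add hb hdiff, integral_const_mul, integral_sub ha₁ hb₁]⟩

end Integrals

lemma re_integral_gradInner_midpoint_sub {d : ℕ} {μ : Measure (Fin d → ℝ)}
    {u v : (Fin d → ℝ) → ℂ} (hu : Differentiable ℝ u) (hv : Differentiable ℝ v)
    (huv : Integrable (gradInner d (fun y => (u y + v y) / 2) (fun y => u y - v y)) μ)
    (hu₂ : Integrable (gradsq d u) μ) (hv₂ : Integrable (gradsq d v) μ) :
    (∫ x, gradInner d (fun y => (u y + v y) / 2) (fun y => u y - v y) x ∂μ).re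
      = ((∫ x, gradsq d u x ∂μ) - ∫ x, gradsq d v x ∂μ) / 2 := by
  rw [← RCLike.re_to_complex, ← integral_re huv]
  simp only [RCLike.re_to_complex, re_gradInner_midpoint_sub (hu _) (hv _)]
  rw [integral_div, integral_sub hu₂ hv₂]

noncomputable def relaxationEnergy (d σ : ℕ) (β : ℝ) (φ : (Fin d → ℝ) → ℂ)
    (γ : (Fin d → ℝ) → ℝ) : ℝ :=
  ∫ x, ((1 / 4) * gradsq d φ x + (β / 2) * γ x ^ σ * ‖φ x‖ ^ 2
    - β * σ / (2 * (σ + 1)) * γ x ^ (σ + 1))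

lemma relaxationEnergy_eq {d σ : ℕ} {β : ℝ} {φ : (Fin d → ℝ) → ℂ} {γ : (Fin d → ℝ) → ℝ}
    (hφ : Integrable (gradsq d φ)) (hγφ : Integrable (fun x => γ x ^ σ * ‖φ x‖ ^ 2))
    (hγ : Integrable (fun x => γ x ^ (σ + 1))) :
    relaxationEnergy d σ β φ γ
      = 1 / 4 * (∫ x, gradsq d φ x) + β / 2 * (∫ x, γ x ^ σ * ‖φ x‖ ^ 2)
        - β * σ / (2 * (σ + 1)) * ∫ x, γ x ^ (σ + 1) := by
  simp_rw [relaxationEnergy, mul_assoc (β / 2)]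
  rw [integral_sub ((hφ.const_mul _).fun_add (hγφ.const_mul _)) (hγ.const_mul _),
    integral_add (hφ.const_mul _) (hγφ.const_mul _), integral_const_mul, integral_const_mul,
    integral_const_mul]

theorem generalized_relaxation_energy_preservation_general
    (d σ : ℕ) (β δt : ℝ)
    (φn φp : (Fin d → ℝ) → ℂ) (γm γp : (Fin d → ℝ) → ℝ)
    (hφn : ContDiff ℝ 2 φn) (hφp : ContDiff ℝ 2 φp)
    (hconstraint : ∀ x, γp x ^ (σ + 1) - γm x ^ (σ + 1)
      = ((σ + 1 : ℝ) / σ) * ‖φn x‖ ^ 2 * (γp x ^ σ - γm x ^ σ))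
    (hscheme : ∀ x, Complex.I * ((φp x - φn x) / (δt : ℂ))
      = -(1 / 2 : ℂ) * lap d (fun y => (φp y + φn y) / 2) x
        + (β : ℂ) * ((γp x ^ σ : ℝ) : ℂ) * ((φp x + φn x) / 2))
    (hIBP : (∫ x, lap d (fun y => (φp y + φn y) / 2) x * (starRingEnd ℂ) (φp x - φn x))
      = -(∫ x, gradInner d (fun y => (φp y + φn y) / 2) (fun y => φp y - φn y) x))
    (hInt1 : Integrable (fun x => gradsq d φp x))
    (hInt2 : Integrable (fun x => gradsq d φn x))
    (hInt3 : Integrable (fun x => γp x ^ σ * ‖φp x‖ ^ 2))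
    (hInt4 : Integrable (fun x => γm x ^ σ * ‖φn x‖ ^ 2))
    (hInt5 : Integrable (fun x => γp x ^ (σ + 1)))
    (hInt6 : Integrable (fun x => γm x ^ (σ + 1)))
    (hInt7 : Integrable (fun x =>
      lap d (fun y => (φp y + φn y) / 2) x * (starRingEnd ℂ) (φp x - φn x)))
    (hInt8 : Integrable (fun x =>
      gradInner d (fun y => (φp y + φn y) / 2) (fun y => φp y - φn y) x)) :
    (∫ x, ((1 / 4) * gradsq d φp x + (β / 2) * γp x ^ σ * ‖φp x‖ ^ 2
        - β * σ / (2 * (σ + 1)) * γp x ^ (σ + 1)))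
      = ∫ x, ((1 / 4) * gradsq d φn x + (β / 2) * γm x ^ σ * ‖φn x‖ ^ 2
        - β * σ / (2 * (σ + 1)) * γm x ^ (σ + 1)) := by
  obtain ⟨hInt9, hcross⟩ :=
    integrable_and_integral_pow_mul_of_relaxation hconstraint hInt4 hInt5 hInt6
  have hbalance := congrArg Complex.re hIBP
  rw [re_integral_mul_conj_sub_of_crankNicolson hscheme hInt7 hInt3 hInt9, Complex.neg_re,
    re_integral_gradInner_midpoint_sub (hφp.differentiable two_ne_zero)
      (hφn.differentiable two_ne_zero) hInt8 hInt1 hInt2] at hbalance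
  change relaxationEnergy d σ β φp γp = relaxationEnergy d σ β φn γm
  rw [relaxationEnergy_eq hInt1 hInt3 hInt5, relaxationEnergy_eq hInt2 hInt4 hInt6,
    mul_div_mul_comm]
  linear_combination (1 / 2) * hbalance + (β / 2) * hcross

/-- Energy preservation of the generalized relaxation method for NLS with power
nonlinearity `|φ|^{2σ}`: under the relaxation constraint and the scheme equation,
`E_rlx(φ_{n+1}, γ_{n+1/2}) = E_rlx(φ_n, γ_{n-1/2})` where
`E_rlx(φ,γ) = ∫ ((1/4)|∇φ|² + (β/2)γ^σ|φ|² − βσ/(2(σ+1)) γ^{σ+1})`. -/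
theorem generalized_relaxation_energy_preservation
    (d σ : ℕ) (hd : 1 ≤ d) (hσ : 1 ≤ σ) (β δt : ℝ) (hδt : 0 < δt)
    (φn φp : (Fin d → ℝ) → ℂ) (γm γp : (Fin d → ℝ) → ℝ)
    (hγm : ∀ x, 0 ≤ γm x) (hγp : ∀ x, 0 ≤ γp x)
    (hφn : ContDiff ℝ 2 φn) (hφp : ContDiff ℝ 2 φp)
    (hconstraint : ∀ x, γp x ^ (σ + 1) - γm x ^ (σ + 1)
      = ((σ + 1 : ℝ) / σ) * ‖φn x‖ ^ 2 * (γp x ^ σ - γm x ^ σ))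
    (hscheme : ∀ x, Complex.I * ((φp x - φn x) / (δt : ℂ))
      = -(1 / 2 : ℂ) * lap d (fun y => (φp y + φn y) / 2) x
        + (β : ℂ) * ((γp x ^ σ : ℝ) : ℂ) * ((φp x + φn x) / 2))
    (hIBP : (∫ x, lap d (fun y => (φp y + φn y) / 2) x * (starRingEnd ℂ) (φp x - φn x))
      = -(∫ x, gradInner d (fun y => (φp y + φn y) / 2) (fun y => φp y - φn y) x))
    (hInt1 : Integrable (fun x => gradsq d φp x))
    (hInt2 : Integrable (fun x => gradsq d φn x))
    (hInt3 : Integrable (fun x => γp x ^ σ * ‖φp x‖ ^ 2))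
    (hInt4 : Integrable (fun x => γm x ^ σ * ‖φn x‖ ^ 2))
    (hInt5 : Integrable (fun x => γp x ^ (σ + 1)))
    (hInt6 : Integrable (fun x => γm x ^ (σ + 1)))
    (hInt7 : Integrable (fun x =>
      lap d (fun y => (φp y + φn y) / 2) x * (starRingEnd ℂ) (φp x - φn x)))
    (hInt8 : Integrable (fun x =>
      gradInner d (fun y => (φp y + φn y) / 2) (fun y => φp y - φn y) x)) :
    (∫ x, ((1 / 4) * gradsq d φp x + (β / 2) * γp x ^ σ * ‖φp x‖ ^ 2
        - β * σ / (2 * (σ + 1)) * γp x ^ (σ + 1)))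
      = ∫ x, ((1 / 4) * gradsq d φn x + (β / 2) * γm x ^ σ * ‖φn x‖ ^ 2
        - β * σ / (2 * (σ + 1)) * γm x ^ (σ + 1)) :=
  generalized_relaxation_energy_preservation_general d σ β δt φn φp γm γp hφn hφp hconstraint
    hscheme hIBP hInt1 hInt2 hInt3 hInt4 hInt5 hInt6 hInt7 hInt8
end
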